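/- For every symmetric convex body K ⊂ ℝ^n, the Löwner ellipsoid satisfies Löw(K) ⊆ √n · K; equivalently, vrad(K) ≥ vrad(Löw(K))/√n. -/

import Mathlib

/-!
After an affine change of variables the Löwner ellipsoid of `K` is the unit ball `B`, and
minimality says that every centred ellipsoid `L '' B ⊇ K` has `|det L| ≥ 1`. Its centre `d` is
`0`: by symmetry `K` lies in the unit balls about `d` and `-d`, hence, by the parallelogram law, in
the ball of radius `√(1 - ‖d‖²)`. If some `x₀ ∈ B` were not in `√n • K`, a separating hyperplane
would put `K` in a slab `|⟪v, x⟫| ≤ h` with `h < 1 / √n`. The ellipsoid with semi-axis `√n h`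
along `v` and `√(n (1 - h²) / (n - 1))` across it contains `B` cut by the slab, and the square of
its volume ratio is `p (1 + (1 - p) / (n - 1)) ^ (n - 1) ≤ p e ^ (1 - p) < 1` for `p = n h²`,
contradicting minimality (for `n = 1` the slab itself is a smaller ball).
-/

open MeasureTheory Pointwise

/-- An ellipsoid in `ℝ^n`. -/
def IsEllipsoid {n : ℕ} (E : Set (EuclideanSpace ℝ (Fin n))) : Prop :=
  ∃ (L : EuclideanSpace ℝ (Fin n) ≃ₗ[ℝ] EuclideanSpace ℝ (Fin n))
    (c : EuclideanSpace ℝ (Fin n)),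
    E = (fun x => c + L x) '' Metric.closedBall (0 : EuclideanSpace ℝ (Fin n)) 1

/-- `E` is the Löwner (minimal-volume circumscribed) ellipsoid of `K`. -/
def IsLoewner {n : ℕ} (K E : Set (EuclideanSpace ℝ (Fin n))) : Prop :=
  IsEllipsoid E ∧ K ⊆ E ∧
    ∀ E', IsEllipsoid E' → K ⊆ E' → volume E ≤ volume E'

open Metric Module RealInnerProductSpace

lemma mul_one_add_div_pow_lt_one {p : ℝ} (hp0 : 0 < p) (hp1 : p < 1) (m : ℕ) :
    p * (1 + (1 - p) / m) ^ m < 1 := by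
  have hexp : (1 + (1 - p) / m) ^ m ≤ Real.exp (1 - p) := by
    convert Real.one_sub_div_pow_le_exp_neg (n := m) (t := p - 1)
      (by linarith [m.cast_nonneg (α := ℝ)]) using 2 <;> ring
  have hp : p < Real.exp (p - 1) := by linarith [Real.add_one_lt_exp (x := p - 1) (by linarith)]
  calc p * (1 + (1 - p) / m) ^ m ≤ p * Real.exp (1 - p) := by gcongr
    _ < Real.exp (p - 1) * Real.exp (1 - p) := by gcongr
    _ = 1 := by rw [← Real.exp_add]; simp

section Ellipsoids

variable {E : Type*} [NormedAddCommGroup E] [InnerProductSpace ℝ E]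

lemma exists_abs_det_lt_one_closedBall_subset [FiniteDimensional ℝ E] [Nontrivial E] {r : ℝ}
    (hr : r < 1) :
    ∃ L : E ≃ₗ[ℝ] E,
      |LinearMap.det (L : E →ₗ[ℝ] E)| < 1 ∧ closedBall 0 r ⊆ L '' closedBall 0 1 := by
  -- scale by `ρ = max r (1 / 2)` rather than `r`, which may be `≤ 0`
  set ρ := max r (1 / 2)
  have hρ0 : 0 < ρ := lt_max_of_lt_right one_half_pos
  have hρ1 : ρ < 1 := max_lt hr one_half_lt_one
  refine ⟨LinearEquiv.smulOfNeZero ℝ E ρ hρ0.ne', ?_,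
    fun x hx => ⟨ρ⁻¹ • x, ?_, smul_inv_smul₀ hρ0.ne' x⟩⟩
  · rw [show (LinearEquiv.smulOfNeZero ℝ E ρ hρ0.ne' : E →ₗ[ℝ] E) = ρ • LinearMap.id from rfl,
      LinearMap.det_smul, LinearMap.det_id, mul_one, abs_of_pos (by positivity)]
    exact pow_lt_one₀ hρ0.le hρ1 finrank_pos.ne'
  · rw [mem_closedBall_zero_iff, norm_smul, norm_inv, Real.norm_of_nonneg hρ0.le,
      inv_mul_le_one₀ hρ0]
    exact (mem_closedBall_zero_iff.1 hx).trans (le_max_left _ _)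

/-- For a unit vector `v`: scaling by `a` along `v` and by `b` on `vᗮ`. -/
noncomputable def stretch (v : E) (a b : ℝ) : E →ₗ[ℝ] E :=
  b • LinearMap.id + (a - b) • (innerₛₗ ℝ v).smulRight v

lemma stretch_apply (v x : E) (a b : ℝ) :
    stretch v a b x = b • x + (a - b) • ⟪v, x⟫ • v := rfl

lemma stretch_one_one (v : E) : stretch v 1 1 = LinearMap.id := by
  ext x
  simp [stretch_apply]

lemma stretch_eq_smul_transvection (v : E) (a : ℝ) {b : ℝ} (hb : b ≠ 0) :
    stretch v a b = b • LinearMap.transvection (((a - b) / b) • innerₛₗ ℝ v) v := by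
  ext x
  simp only [stretch_apply, LinearMap.smul_apply, LinearMap.transvection.apply, smul_add,
    innerₛₗ_apply_apply, smul_eq_mul, smul_smul]
  field_simp

variable {v : E} (hv : ‖v‖ = 1)
include hv

lemma stretch_comp_stretch (a b c d : ℝ) :
    stretch v a b ∘ₗ stretch v c d = stretch v (a * c) (b * d) := by
  ext x
  simp only [LinearMap.comp_apply, stretch_apply, inner_add_right, inner_smul_right,
    inner_self_eq_one_of_norm_eq_one hv]
  module

noncomputable def stretchEquiv {a b : ℝ} (ha : a ≠ 0) (hb : b ≠ 0) : E ≃ₗ[ℝ] E :=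
  .ofLinearMap (stretch v a b) (stretch v a⁻¹ b⁻¹)
    (by rw [stretch_comp_stretch hv, mul_inv_cancel₀ ha, mul_inv_cancel₀ hb, stretch_one_one])
    (by rw [stretch_comp_stretch hv, inv_mul_cancel₀ ha, inv_mul_cancel₀ hb, stretch_one_one])

@[simp] lemma coe_stretchEquiv {a b : ℝ} (ha : a ≠ 0) (hb : b ≠ 0) :
    (stretchEquiv hv ha hb : E →ₗ[ℝ] E) = stretch v a b := rfl

@[simp] lemma stretchEquiv_symm_apply {a b : ℝ} (ha : a ≠ 0) (hb : b ≠ 0) (x : E) :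
    (stretchEquiv hv ha hb).symm x = stretch v a⁻¹ b⁻¹ x := rfl

lemma det_stretch [FiniteDimensional ℝ E] (a : ℝ) {b : ℝ} (hb : b ≠ 0) :
    LinearMap.det (stretch v a b) = a * b ^ (finrank ℝ E - 1) := by
  have : Nontrivial E := nontrivial_of_ne v 0 (by rintro rfl; simp at hv)
  obtain ⟨m, hm⟩ : ∃ m, finrank ℝ E = m + 1 := Nat.exists_eq_add_one.2 finrank_pos
  rw [stretch_eq_smul_transvection v a hb, LinearMap.det_smul, LinearMap.transvection.det, hm]
  simp only [LinearMap.smul_apply, innerₛₗ_apply_apply, inner_self_eq_one_of_norm_eq_one hv,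
    smul_eq_mul, add_tsub_cancel_right]
  field_simp
  ring

lemma norm_stretch_sq (a b : ℝ) (x : E) :
    ‖stretch v a b x‖ ^ 2 = b ^ 2 * (‖x‖ ^ 2 - ⟪v, x⟫ ^ 2) + a ^ 2 * ⟪v, x⟫ ^ 2 := by
  rw [stretch_apply, ← real_inner_self_eq_norm_sq, ← real_inner_self_eq_norm_sq]
  simp only [inner_add_left, inner_add_right, inner_smul_left, inner_smul_right,
    inner_self_eq_one_of_norm_eq_one hv, real_inner_comm x v, RCLike.conj_to_real]
  ring

lemma mem_stretchEquiv_image_closedBall {a b h : ℝ} (ha : 0 < a) (hab : a ≤ b)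
    (hcorner : h ^ 2 / a ^ 2 + (1 - h ^ 2) / b ^ 2 ≤ 1) {x : E} (hx : ‖x‖ ≤ 1)
    (hxh : |⟪v, x⟫| ≤ h) :
    x ∈ stretchEquiv hv ha.ne' (ha.trans_le hab).ne' '' closedBall 0 1 := by
  have hX : ‖x‖ ^ 2 ≤ 1 := pow_le_one₀ (norm_nonneg x) hx
  have hT : ⟪v, x⟫ ^ 2 ≤ h ^ 2 := sq_le_sq' (abs_le.1 hxh).1 (abs_le.1 hxh).2
  have hAB : b⁻¹ ^ 2 ≤ a⁻¹ ^ 2 := by have := ha.trans_le hab; gcongr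
  have hcorner' : b⁻¹ ^ 2 + (a⁻¹ ^ 2 - b⁻¹ ^ 2) * h ^ 2 ≤ 1 := by
    convert hcorner using 1; ring
  rw [LinearEquiv.image_eq_preimage_symm, Set.mem_preimage, stretchEquiv_symm_apply,
    mem_closedBall_zero_iff, ← sq_le_one_iff₀ (norm_nonneg _), norm_stretch_sq hv]
  nlinarith [mul_le_mul_of_nonneg_left hX (sq_nonneg b⁻¹),
    mul_le_mul_of_nonneg_left hT (sub_nonneg.2 hAB)]

lemma norm_eq_abs_inner_of_finrank_eq_one (hE : finrank ℝ E = 1) (x : E) : ‖x‖ = |⟪v, x⟫| := by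
  obtain ⟨c, rfl⟩ := (finrank_eq_one_iff_of_nonzero' v (by rintro rfl; simp at hv)).1 hE x
  simp [norm_smul, inner_smul_right, hv]

lemma exists_abs_det_lt_one_ball_inter_slab_subset [FiniteDimensional ℝ E] {h : ℝ} (h0 : 0 < h)
    (hh : finrank ℝ E * h ^ 2 < 1) :
    ∃ L : E ≃ₗ[ℝ] E, |LinearMap.det (L : E →ₗ[ℝ] E)| < 1 ∧
      ∀ x, ‖x‖ ≤ 1 → |⟪v, x⟫| ≤ h → x ∈ L '' closedBall 0 1 := by
  have : Nontrivial E := nontrivial_of_ne v 0 (by rintro rfl; simp at hv)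
  obtain ⟨m, hm⟩ : ∃ m, finrank ℝ E = m + 1 := Nat.exists_eq_add_one.2 finrank_pos
  rw [hm] at hh
  push_cast at hh
  obtain _ | m := m
  · obtain ⟨L, hL, hhL⟩ :=
      exists_abs_det_lt_one_closedBall_subset (E := E) (r := h) (by nlinarith)
    refine ⟨L, hL, fun x _ hxh => hhL ?_⟩
    rwa [mem_closedBall_zero_iff, norm_eq_abs_inner_of_finrank_eq_one hv hm]
  -- the semi-axes are `√p` along `v` and `√q = √(n (1 - h²) / (n - 1))` across it, `n = m + 2`
  set p : ℝ := (m + 2) * h ^ 2 with hp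
  set q : ℝ := 1 + (1 - p) / (m + 1) with hq
  have hp0 : 0 < p := by positivity
  have hp1 : p < 1 := by push_cast at hh; linarith
  have hpq : p ≤ q := le_add_of_le_of_nonneg hp1.le (div_nonneg (by linarith) (by positivity))
  have hα : 0 < √p := Real.sqrt_pos.2 hp0
  have hβ : 0 < √q := Real.sqrt_pos.2 (hp0.trans_le hpq)
  refine ⟨stretchEquiv hv hα.ne' hβ.ne', ?_,
    fun x hx hxh => mem_stretchEquiv_image_closedBall hv hα (Real.sqrt_le_sqrt hpq) ?_ hx hxh⟩
  · have hsq : (√p * √q ^ (m + 1)) ^ 2 = p * q ^ (m + 1) := by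
      rw [mul_pow, ← pow_mul, mul_comm (m + 1), pow_mul, Real.sq_sqrt hp0.le,
        Real.sq_sqrt (hp0.trans_le hpq).le]
    rw [coe_stretchEquiv, det_stretch hv _ hβ.ne', hm, Nat.add_sub_cancel,
      abs_of_pos (by positivity), ← sq_lt_one_iff₀ (by positivity), hsq]
    simpa using mul_one_add_div_pow_lt_one hp0 hp1 (m + 1)
  · have hh1 : 1 - h ^ 2 ≠ 0 := by nlinarith
    have hq' : q = (m + 2) * (1 - h ^ 2) / (m + 1) := by rw [hq, hp]; field_simp; ring
    rw [Real.sq_sqrt hp0.le, Real.sq_sqrt (hp0.trans_le hpq).le, hq', hp]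
    apply le_of_eq
    field_simp
    ring

end Ellipsoids

section Minimality

variable {E : Type*} [NormedAddCommGroup E] [InnerProductSpace ℝ E]

lemma exists_unit_abs_inner_lt_of_notMem [CompleteSpace E] {K : Set E} (hKc : Convex ℝ K)
    (hKcl : IsClosed K) (hsym : K = -K) (hne : K.Nonempty) {x₀ : E} (hx₀ : x₀ ∉ K) :
    ∃ v : E, ∃ u : ℝ, ‖v‖ = 1 ∧ (∀ x ∈ K, |⟪v, x⟫| < u) ∧ u < ⟪v, x₀⟫ := by
  obtain ⟨f, u, hfK, hfx₀⟩ := geometric_hahn_banach_closed_point hKc hKcl hx₀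
  set w := (InnerProductSpace.toDual ℝ E).symm f
  have hw : ∀ x, ⟪w, x⟫ = f x := fun x => InnerProductSpace.toDual_symm_apply
  have hwK : ∀ x ∈ K, |⟪w, x⟫| < u := by
    intro x hx
    have hx' : -x ∈ K := by rw [hsym]; exact Set.neg_mem_neg.2 hx
    rw [abs_lt, hw, ← neg_lt, ← map_neg]
    exact ⟨hfK _ hx', hfK x hx⟩
  have hw0 : 0 < ‖w‖ := by
    have hu : 0 < u := (abs_nonneg _).trans_lt (hwK _ hne.some_mem)
    have hwx₀ : 0 < ⟪w, x₀⟫ := hw x₀ ▸ hu.trans hfx₀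
    exact norm_pos_iff.2 fun h => by simp [h] at hwx₀
  refine ⟨‖w‖⁻¹ • w, ‖w‖⁻¹ * u, by rw [norm_smul, norm_inv, norm_norm, inv_mul_cancel₀ hw0.ne'],
    fun x hx => ?_, ?_⟩
  · rw [real_inner_smul_left, abs_mul, abs_inv, abs_norm]
    exact mul_lt_mul_of_pos_left (hwK x hx) (inv_pos.2 hw0)
  · rw [real_inner_smul_left, hw]
    exact mul_lt_mul_of_pos_left hfx₀ (inv_pos.2 hw0)

variable [FiniteDimensional ℝ E] [Nontrivial E] {K : Set E}
  (hmin : ∀ L : E ≃ₗ[ℝ] E, K ⊆ L '' closedBall 0 1 → 1 ≤ |LinearMap.det (L : E →ₗ[ℝ] E)|)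
include hmin

lemma one_le_of_subset_closedBall {r : ℝ} (hK : K ⊆ closedBall 0 r) : 1 ≤ r := by
  by_contra! hr
  obtain ⟨L, hL, hrL⟩ := exists_abs_det_lt_one_closedBall_subset (E := E) hr
  exact (hmin L (hK.trans hrL)).not_gt hL

lemma eq_zero_of_subset_closedBall (hsym : K = -K) {d : E} (hK : K ⊆ closedBall d 1) :
    d = 0 := by
  have hK' : K ⊆ closedBall 0 √(1 - ‖d‖ ^ 2) := by
    intro x hx
    have hx' : -x ∈ K := by rw [hsym]; exact Set.neg_mem_neg.2 hx
    have h1 : ‖x - d‖ ≤ 1 := mem_closedBall_iff_norm.1 (hK hx)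
    have h2 : ‖x + d‖ ≤ 1 := by
      rw [← norm_neg, neg_add']
      exact mem_closedBall_iff_norm.1 (hK hx')
    have := parallelogram_law_with_norm ℝ x d
    rw [mem_closedBall_zero_iff]
    apply Real.le_sqrt_of_sq_le
    nlinarith [norm_nonneg (x + d), norm_nonneg (x - d)]
  have := one_le_of_subset_closedBall hmin hK'
  rw [Real.one_le_sqrt] at this
  exact norm_eq_zero.1 (by nlinarith [norm_nonneg d])

lemma closedBall_subset_sqrt_finrank_smul (hKc : Convex ℝ K) (hKcl : IsClosed K)
    (hsym : K = -K) (hne : K.Nonempty) (hKB : K ⊆ closedBall 0 1) :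
    closedBall (0 : E) 1 ⊆ √(finrank ℝ E) • K := by
  intro x₀ hx₀
  set s := √(finrank ℝ E)
  have hs : 0 < s := Real.sqrt_pos.2 (by exact_mod_cast finrank_pos)
  by_contra hx₀K
  have : s⁻¹ • x₀ ∉ K := fun h => hx₀K ⟨_, h, smul_inv_smul₀ hs.ne' x₀⟩
  obtain ⟨v, u, hv, hKu, hux⟩ := exists_unit_abs_inner_lt_of_notMem hKc hKcl hsym hne this
  have hu0 : 0 < u := (abs_nonneg _).trans_lt (hKu _ hne.some_mem)
  have hsu : s * u < 1 := by
    have hvx₀ := real_inner_le_norm v (s⁻¹ • x₀)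
    rw [hv, one_mul, norm_smul, norm_inv, Real.norm_of_nonneg hs.le] at hvx₀
    calc s * u < s * (s⁻¹ * ‖x₀‖) := mul_lt_mul_of_pos_left (hux.trans_le hvx₀) hs
      _ = ‖x₀‖ := mul_inv_cancel_left₀ hs.ne' _
      _ ≤ 1 := mem_closedBall_zero_iff.1 hx₀
  have hh : finrank ℝ E * u ^ 2 < 1 := by
    rw [← Real.sq_sqrt (Nat.cast_nonneg (finrank ℝ E)), ← mul_pow]
    exact pow_lt_one₀ (by positivity) hsu two_ne_zero
  obtain ⟨L, hL, hKL⟩ := exists_abs_det_lt_one_ball_inter_slab_subset hv hu0 hh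
  exact (hmin L fun x hx => hKL x (mem_closedBall_zero_iff.1 (hKB hx)) (hKu x hx).le).not_gt hL

end Minimality

lemma addHaar_image_add_linearMap {F : Type*} [NormedAddCommGroup F] [NormedSpace ℝ F]
    [MeasurableSpace F] [BorelSpace F] [FiniteDimensional ℝ F] (μ : Measure F)
    [μ.IsAddHaarMeasure] (c : F) (f : F →ₗ[ℝ] F) (s : Set F) :
    μ ((fun x => c + f x) '' s) = ENNReal.ofReal |LinearMap.det f| * μ s := by
  rw [show (fun x => c + f x) '' s = c +ᵥ f '' s by rw [← Set.image_vadd, Set.image_image]; rfl,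
    measure_vadd, Measure.addHaar_image_linearMap]

lemma one_le_abs_det_of_isLoewner {n : ℕ} {K : Set (EuclideanSpace ℝ (Fin n))}
    {L : EuclideanSpace ℝ (Fin n) ≃ₗ[ℝ] EuclideanSpace ℝ (Fin n)} {c : EuclideanSpace ℝ (Fin n)}
    (hE : IsLoewner K ((fun x => c + L x) '' closedBall 0 1))
    (L' : EuclideanSpace ℝ (Fin n) ≃ₗ[ℝ] EuclideanSpace ℝ (Fin n))
    (hK : L.symm '' K ⊆ L' '' closedBall 0 1) :
    1 ≤ |LinearMap.det (L' : EuclideanSpace ℝ (Fin n) →ₗ[ℝ] EuclideanSpace ℝ (Fin n))| := by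
  have hKE : K ⊆ (fun x => 0 + (L'.trans L) x) '' closedBall 0 1 := by
    intro x hx
    obtain ⟨y, hy, hyx⟩ := hK ⟨x, hx, rfl⟩
    exact ⟨y, hy, by simp [hyx]⟩
  have hvol := hE.2.2 _ ⟨L'.trans L, 0, rfl⟩ hKE
  have hB0 : volume (closedBall (0 : EuclideanSpace ℝ (Fin n)) 1) ≠ 0 :=
    (measure_closedBall_pos volume 0 one_pos).ne'
  have hBtop : volume (closedBall (0 : EuclideanSpace ℝ (Fin n)) 1) ≠ ⊤ :=
    measure_closedBall_lt_top.ne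
  rw [← LinearEquiv.coe_coe, addHaar_image_add_linearMap, ← LinearEquiv.coe_coe,
    addHaar_image_add_linearMap, ENNReal.mul_le_mul_iff_left hB0 hBtop,
    ENNReal.ofReal_le_ofReal_iff (abs_nonneg _), LinearEquiv.coe_trans, LinearMap.det_comp,
    abs_mul] at hvol
  have hL : 0 < |LinearMap.det (L : EuclideanSpace ℝ (Fin n) →ₗ[ℝ] EuclideanSpace ℝ (Fin n))| :=
    abs_pos.2 (LinearEquiv.isUnit_det' L).ne_zero
  exact le_of_mul_le_mul_left (by simpa using hvol) hL

/-- John's theorem, symmetric case: for a symmetric convex body `K ⊂ ℝ^n`, the Löwner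
ellipsoid satisfies `Löw(K) ⊆ √n · K`. -/
theorem stmt_16 (n : ℕ) (K : Set (EuclideanSpace ℝ (Fin n)))
    (hKc : Convex ℝ K) (hKcp : IsCompact K) (hKne : (interior K).Nonempty)
    (hKsym : K = -K) (E : Set (EuclideanSpace ℝ (Fin n))) (hE : IsLoewner K E) :
    E ⊆ Real.sqrt n • K := by
  obtain ⟨y, hy⟩ : K.Nonempty := hKne.mono interior_subset
  rcases subsingleton_or_nontrivial (EuclideanSpace ℝ (Fin n)) with _ | _
  · exact fun x _ => Subsingleton.elim (√n • y) x ▸ Set.smul_mem_smul_set hy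
  obtain ⟨L, c, rfl⟩ := hE.1
  set K' := L.symm '' K
  have hmin := one_le_abs_det_of_isLoewner hE
  have hK'sym : K' = -K' := by rw [← Set.image_neg, ← hKsym]
  have hK'c : K' ⊆ closedBall (L.symm c) 1 := by
    rintro _ ⟨x, hx, rfl⟩
    obtain ⟨z, hz, rfl⟩ := hE.2.1 hx
    simpa [mem_closedBall_iff_norm] using hz
  obtain rfl : c = 0 := L.symm.map_eq_zero_iff.1 (eq_zero_of_subset_closedBall hmin hK'sym hK'c)
  rw [map_zero] at hK'c
  have hball := closedBall_subset_sqrt_finrank_smul hmin (hKc.linear_image _)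
    (hKcp.image (LinearMap.continuous_of_finiteDimensional L.symm.toLinearMap)).isClosed hK'sym
    ⟨_, y, hy, rfl⟩ hK'c
  rw [finrank_euclideanSpace_fin] at hball
  simp only [zero_add]
  calc L '' closedBall 0 1 ⊆ L '' (√n • K') := Set.image_mono hball
    _ = √n • K := by rw [image_smul_set, Set.image_image]; simp
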